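/- Let ℏ and ℏ′ be distinct nonzero complex numbers, and let V be a finite-dimensional A-module containing a submodule W such that W is isomorphic to V^{ℏ′}(1) and the quotient V/W is isomorphic to V^ℏ(1). Then the extension splits: V is isomorphic to V^ℏ(1) ⊕ V^{ℏ′}(1). (It is impossible to glue the modules V^ℏ for different values of ℏ.) -/

import Mathlib

/-- A subspace invariant under the two operators `X`, `Y` (i.e. a submodule for
the module structure they define). -/
def AInvariant {V : Type} [AddCommGroup V] [Module ℂ V] (X Y : Module.End ℂ V)
    (p : Submodule ℂ V) : Prop :=
  ∀ v ∈ p, X v ∈ p ∧ Y v ∈ p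

/-- A module (given by a vector space with two operators `X`, `Y`) is
indecomposable if it is nonzero and is not the internal direct sum of two
nonzero invariant subspaces. -/
def AIndecomposable {V : Type} [AddCommGroup V] [Module ℂ V]
    (X Y : Module.End ℂ V) : Prop :=
  (∃ v : V, v ≠ 0) ∧ ∀ p q : Submodule ℂ V, AInvariant X Y p → AInvariant X Y q →
    IsCompl p q → p = ⊥ ∨ q = ⊥

/-- An isomorphism of modules given by pairs of endomorphisms: a linear
equivalence intertwining the respective actions. -/
def AModIso {V W : Type} [AddCommGroup V] [Module ℂ V] [AddCommGroup W] [Module ℂ W]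
    (X Y : Module.End ℂ V) (X' Y' : Module.End ℂ W) : Prop :=
  ∃ e : V ≃ₗ[ℂ] W, (∀ v, e (X v) = X' (e v)) ∧ (∀ v, e (Y v) = Y' (e v))

/-- The `n × n` Jordan block `J_n(ℏ)` with eigenvalue `ℏ`. -/
def jordan (n : ℕ) (ℏ : ℂ) : Matrix (Fin n) (Fin n) ℂ :=
  Matrix.of fun i j : Fin n =>
    if i = j then ℏ else if (j : ℕ) = (i : ℕ) + 1 then 1 else 0

/-- The action of `X` on the module `V^ℏ(n) = ℂⁿ ⊕ ℂⁿ`: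
`X(u,v) = (J_n(ℏ)v, 0)`. -/
noncomputable def VhX (n : ℕ) (ℏ : ℂ) : Module.End ℂ ((Fin n → ℂ) × (Fin n → ℂ)) :=
  LinearMap.prod
    ((Matrix.toLin' (jordan n ℏ)).comp (LinearMap.snd ℂ (Fin n → ℂ) (Fin n → ℂ)))
    (0 : ((Fin n → ℂ) × (Fin n → ℂ)) →ₗ[ℂ] (Fin n → ℂ))

/-- The action of `Y` on the module `V^ℏ(n) = ℂⁿ ⊕ ℂⁿ`: `Y(u,v) = (0, u)`. -/
noncomputable def VhY (n : ℕ) : Module.End ℂ ((Fin n → ℂ) × (Fin n → ℂ)) :=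
  LinearMap.prod (0 : ((Fin n → ℂ) × (Fin n → ℂ)) →ₗ[ℂ] (Fin n → ℂ))
    (LinearMap.fst ℂ (Fin n → ℂ) (Fin n → ℂ))

/-! Since `X² = Y² = 0`, the element `E = XY + YX` commutes with `X` and `Y`. It acts by `ℏ'`
on `W` and by `ℏ` on `V ⧸ W`, so for `ℏ ≠ ℏ'` the operator `g = (E - ℏ) / (ℏ' - ℏ)` is a projection
onto `W` commuting with `X` and `Y`; then `v ↦ (v mod W, g v)` is an isomorphism of
`A`-modules `V ≅ V ⧸ W × W`. -/

namespace AModIso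

variable {U V W T : Type} [AddCommGroup U] [Module ℂ U] [AddCommGroup V] [Module ℂ V]
  [AddCommGroup W] [Module ℂ W] [AddCommGroup T] [Module ℂ T]

theorem trans {X Y : Module.End ℂ U} {X' Y' : Module.End ℂ V} {X'' Y'' : Module.End ℂ W}
    (h : AModIso X Y X' Y') (h' : AModIso X' Y' X'' Y'') : AModIso X Y X'' Y'' := by
  obtain ⟨e, heX, heY⟩ := h
  obtain ⟨e', he'X, he'Y⟩ := h'
  exact ⟨e.trans e', fun v => by simp [heX, he'X], fun v => by simp [heY, he'Y]⟩

theorem prodMap {X₁ Y₁ : Module.End ℂ U} {X₁' Y₁' : Module.End ℂ V}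
    {X₂ Y₂ : Module.End ℂ W} {X₂' Y₂' : Module.End ℂ T}
    (h₁ : AModIso X₁ Y₁ X₁' Y₁') (h₂ : AModIso X₂ Y₂ X₂' Y₂') :
    AModIso (X₁.prodMap X₂) (Y₁.prodMap Y₂) (X₁'.prodMap X₂') (Y₁'.prodMap Y₂') := by
  obtain ⟨e₁, he₁X, he₁Y⟩ := h₁
  obtain ⟨e₂, he₂X, he₂Y⟩ := h₂
  exact ⟨e₁.prodCongr e₂, fun v => by simp [he₁X, he₂X], fun v => by simp [he₁Y, he₂Y]⟩

theorem anticomm_eq_smul_one {X Y : Module.End ℂ U} {X' Y' : Module.End ℂ V}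
    (h : AModIso X Y X' Y') {c : ℂ} (hc : X' * Y' + Y' * X' = c • 1) :
    X * Y + Y * X = c • 1 := by
  obtain ⟨e, heX, heY⟩ := h
  ext v
  apply e.injective
  simpa [heX, heY] using LinearMap.congr_fun hc (e v)

end AModIso

theorem VhX_mul_VhY_add_VhY_mul_VhX (c : ℂ) : VhX 1 c * VhY 1 + VhY 1 * VhX 1 c = c • 1 := by
  ext p i <;> fin_cases i <;> fin_cases p <;> simp [VhX, VhY, jordan]

theorem commute_anticommutator_of_mul_self_eq_zero {R : Type*} [Ring R] {x : R}
    (hx : x * x = 0) (y : R) : Commute x (x * y + y * x) := by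
  simp only [Commute, SemiconjBy, mul_add, add_mul, ← mul_assoc, hx, zero_mul]
  simp only [mul_assoc, hx, mul_zero, add_zero, zero_add]

namespace LinearMap.IsProj

variable {R V : Type*} [Ring R] [AddCommGroup V] [Module R V] {W : Submodule R V}
  {g : Module.End R V}

noncomputable def quotientProdEquiv (hg : IsProj W g) : V ≃ₗ[R] (V ⧸ W) × W :=
  LinearEquiv.ofBijective (W.mkQ.prod (g.codRestrict W hg.map_mem)) <| by
    refine ⟨?_, ?_⟩
    · rw [← LinearMap.ker_eq_bot, eq_bot_iff]
      intro v hv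
      have hvW : v ∈ W := (Submodule.Quotient.mk_eq_zero W).mp (congrArg Prod.fst hv)
      have hgv : g v = 0 := congrArg (fun p => (p.2 : V)) hv
      rwa [hg.map_id v hvW] at hgv
    · rintro ⟨q, w⟩
      obtain ⟨v, rfl⟩ := Submodule.Quotient.mk_surjective W q
      refine ⟨v - g v + w, Prod.ext ?_ (Subtype.ext ?_)⟩
      · simp [(Submodule.Quotient.mk_eq_zero W).mpr (hg.map_mem v),
          (Submodule.Quotient.mk_eq_zero W).mpr w.2]
      · simp [hg.map_id _ (hg.map_mem v), hg.map_id _ w.2]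

theorem quotientProdEquiv_apply (hg : IsProj W g) (v : V) :
    hg.quotientProdEquiv v = (W.mkQ v, ⟨g v, hg.map_mem v⟩) :=
  rfl

theorem quotientProdEquiv_map_apply (hg : IsProj W g) {X : Module.End R V}
    (hWX : ∀ v ∈ W, X v ∈ W) (hgX : Commute g X) (v : V) :
    hg.quotientProdEquiv (X v) =
      (W.mapQ W X hWX).prodMap (X.restrict hWX) (hg.quotientProdEquiv v) := by
  simp only [quotientProdEquiv_apply, LinearMap.prodMap_apply, Submodule.mkQ_apply,
    Submodule.mapQ_apply]
  exact Prod.ext rfl (Subtype.ext (LinearMap.congr_fun hgX v))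

end LinearMap.IsProj

theorem LinearMap.isProj_of_smul_on_submodule_and_quotient {K V : Type*} [Field K]
    [AddCommGroup V] [Module K V] {W : Submodule K V} {E : Module.End K V} {a b : K}
    (hab : a ≠ b) (hW : ∀ w ∈ W, E w = b • w) (hQ : ∀ v, E v - a • v ∈ W) :
    LinearMap.IsProj W ((b - a)⁻¹ • (E - a • 1)) where
  map_mem v := W.smul_mem _ (hQ v)
  map_id w hw := by
    simp [hW w hw, ← sub_smul, smul_smul, inv_mul_cancel₀ (sub_ne_zero.mpr hab.symm)]

section InvariantSubmodule

variable {V : Type} [AddCommGroup V] [Module ℂ V] {X Y : Module.End ℂ V}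
  {W : Submodule ℂ V} (hWX : ∀ v ∈ W, X v ∈ W) (hWY : ∀ v ∈ W, Y v ∈ W)

theorem anticomm_apply_eq_smul_of_restrict {b : ℂ}
    (h : X.restrict hWX * Y.restrict hWY + Y.restrict hWY * X.restrict hWX = b • 1) :
    ∀ w ∈ W, (X * Y + Y * X) w = b • w := fun w hw => by
  simpa using congrArg Subtype.val (LinearMap.congr_fun h ⟨w, hw⟩)

theorem anticomm_apply_sub_smul_mem_of_mapQ {a : ℂ}
    (h : W.mapQ W X hWX * W.mapQ W Y hWY + W.mapQ W Y hWY * W.mapQ W X hWX = a • 1)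
    (v : V) : (X * Y + Y * X) v - a • v ∈ W := by
  rw [← Submodule.Quotient.mk_eq_zero, Submodule.Quotient.mk_sub, sub_eq_zero]
  simpa using LinearMap.congr_fun h (Submodule.Quotient.mk v)

theorem AModIso.quotient_prod_of_isProj {g : Module.End ℂ V} (hg : LinearMap.IsProj W g)
    (hgX : Commute g X) (hgY : Commute g Y) :
    AModIso X Y ((W.mapQ W X hWX).prodMap (X.restrict hWX))
      ((W.mapQ W Y hWY).prodMap (Y.restrict hWY)) :=
  ⟨hg.quotientProdEquiv, hg.quotientProdEquiv_map_apply hWX hgX,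
    hg.quotientProdEquiv_map_apply hWY hgY⟩

end InvariantSubmodule

theorem no_glue_different_h_general (ℏ ℏ' : ℂ) (hne : ℏ ≠ ℏ')
    (V : Type) [AddCommGroup V] [Module ℂ V]
    (X Y : Module.End ℂ V) (hX : X * X = 0) (hY : Y * Y = 0)
    (W : Submodule ℂ V) (hWX : ∀ v ∈ W, X v ∈ W) (hWY : ∀ v ∈ W, Y v ∈ W)
    (hWiso : AModIso (X.restrict hWX) (Y.restrict hWY) (VhX 1 ℏ') (VhY 1))
    (hQiso : AModIso (Submodule.mapQ W W X fun v hv => hWX v hv)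
      (Submodule.mapQ W W Y fun v hv => hWY v hv) (VhX 1 ℏ) (VhY 1)) :
    AModIso X Y ((VhX 1 ℏ).prodMap (VhX 1 ℏ')) ((VhY 1).prodMap (VhY 1)) := by
  have hEW := anticomm_apply_eq_smul_of_restrict hWX hWY
    (hWiso.anticomm_eq_smul_one (VhX_mul_VhY_add_VhY_mul_VhX ℏ'))
  have hEQ := anticomm_apply_sub_smul_mem_of_mapQ hWX hWY
    (hQiso.anticomm_eq_smul_one (VhX_mul_VhY_add_VhY_mul_VhX ℏ))
  have hg := LinearMap.isProj_of_smul_on_submodule_and_quotient hne hEW hEQ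
  have hEX : Commute (X * Y + Y * X) X :=
    (commute_anticommutator_of_mul_self_eq_zero hX Y).symm
  have hEY : Commute (X * Y + Y * X) Y := by
    simpa [add_comm] using (commute_anticommutator_of_mul_self_eq_zero hY X).symm
  have hgX := (hEX.sub_left ((Commute.one_left X).smul_left ℏ)).smul_left (ℏ' - ℏ)⁻¹
  have hgY := (hEY.sub_left ((Commute.one_left Y).smul_left ℏ)).smul_left (ℏ' - ℏ)⁻¹
  exact (AModIso.quotient_prod_of_isProj hWX hWY hg hgX hgY).trans (hQiso.prodMap hWiso)

/-- It is impossible to glue the modules `V^ℏ` for different values of `ℏ`: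
if `ℏ ≠ ℏ′` are nonzero and a finite-dimensional `A`-module `V` has a
submodule `W ≅ V^{ℏ′}(1)` with quotient `V/W ≅ V^ℏ(1)`, then the extension
splits: `V ≅ V^ℏ(1) ⊕ V^{ℏ′}(1)`. -/
theorem no_glue_different_h (ℏ ℏ' : ℂ) (hℏ : ℏ ≠ 0) (hℏ' : ℏ' ≠ 0) (hne : ℏ ≠ ℏ')
    (V : Type) [AddCommGroup V] [Module ℂ V] [FiniteDimensional ℂ V]
    (X Y : Module.End ℂ V) (hX : X * X = 0) (hY : Y * Y = 0)
    (W : Submodule ℂ V) (hWX : ∀ v ∈ W, X v ∈ W) (hWY : ∀ v ∈ W, Y v ∈ W)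
    (hWiso : AModIso (X.restrict hWX) (Y.restrict hWY) (VhX 1 ℏ') (VhY 1))
    (hQiso : AModIso (Submodule.mapQ W W X fun v hv => hWX v hv)
      (Submodule.mapQ W W Y fun v hv => hWY v hv) (VhX 1 ℏ) (VhY 1)) :
    AModIso X Y ((VhX 1 ℏ).prodMap (VhX 1 ℏ')) ((VhY 1).prodMap (VhY 1)) :=
  no_glue_different_h_general ℏ ℏ' hne V X Y hX hY W hWX hWY hWiso hQiso
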